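/- Let C ⊆ 2^{[n]} be a code realized by convex open sets V_1,...,V_n inside a convex open polyhedron X ⊆ R^d, where each V_i is a finite intersection of open half-spaces U_{i1},...,U_{ik_i} and X = X_1 ∩ ... ∩ X_k for open half-spaces X_j. Let H be the code of the full half-space arrangement {U_{i1},...,U_{nk_n}, X_1,...,X_k} relative to R^d, and let H' = Tk_H({indices of X_1,...,X_k}). Then the morphism f: H' → 2^{[n]} defined by the trunks T_i = Tk_{H'}({i1,...,ik_i}) satisfies f(H') = C. -/

import Mathlib

/-
Every code relative to an ambient set `A` is the set of codewords `{s | x ∈ W s}` of the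
points `x ∈ A`. Taking the trunk on the indices of the `X_j` restricts the points to
`X = ⋂ X_j`, and the morphism given by the blocks `{i1, …, ik_i}` sends the codeword of `x`
in the half-space arrangement to the codeword of `x` in the cover by `V_i = ⋂_j U_{ij}`,
because the block of `i` lies in the codeword of `x` exactly when `x ∈ V_i`.
-/

/-- The code of the cover `U` relative to the ambient set `Xs`. -/
def codeOf {α ι : Type*} [Fintype ι] (U : ι → Set α) (Xs : Set α) :
    Set (Finset ι) :=
  {τ | ((Xs ∩ ⋂ i ∈ τ, U i) \ ⋃ j, ⋃ (_ : j ∉ τ), U j).Nonempty}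

/-- The trunk of `σ` in a code `C`. -/
def Tk {V : Type*} (C : Set (Finset V)) (σ : Finset V) : Set (Finset V) :=
  {τ ∈ C | σ ⊆ τ}

section Codeword

variable {α ι : Type*} [Fintype ι]

open Classical in
noncomputable def codeword (W : ι → Set α) (x : α) : Finset ι :=
  Finset.univ.filter (fun i => x ∈ W i)

@[simp]
theorem mem_codeword {W : ι → Set α} {x : α} {i : ι} : i ∈ codeword W x ↔ x ∈ W i := by
  simp [codeword]

theorem subset_codeword_iff {W : ι → Set α} {x : α} {σ : Finset ι} :
    σ ⊆ codeword W x ↔ x ∈ ⋂ s ∈ σ, W s := by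
  simp [Finset.subset_iff]

theorem codeOf_eq_image_codeword (W : ι → Set α) (A : Set α) :
    codeOf W A = codeword W '' A := by
  ext τ
  constructor
  · rintro ⟨x, ⟨hxA, hxτ⟩, hxout⟩
    refine ⟨x, hxA, Finset.ext fun s => ⟨fun hs => ?_, fun hs => mem_codeword.2 (Set.mem_iInter₂.1 hxτ s hs)⟩⟩
    by_contra hsτ
    exact hxout (Set.mem_iUnion₂.2 ⟨s, hsτ, mem_codeword.1 hs⟩)
  · rintro ⟨x, hxA, rfl⟩
    refine ⟨x, ⟨hxA, subset_codeword_iff.1 subset_rfl⟩, ?_⟩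
    simp

theorem Tk_image_codeword (W : ι → Set α) (A : Set α) (σ : Finset ι) :
    Tk (codeword W '' A) σ = codeword W '' (A ∩ ⋂ s ∈ σ, W s) := by
  ext τ
  constructor
  · rintro ⟨⟨x, hxA, rfl⟩, hσ⟩
    exact ⟨x, ⟨hxA, subset_codeword_iff.1 hσ⟩, rfl⟩
  · rintro ⟨x, ⟨hxA, hxσ⟩, rfl⟩
    exact ⟨⟨x, hxA, rfl⟩, subset_codeword_iff.2 hxσ⟩

theorem filter_subset_codeword {κ : Type*} [Fintype κ] [DecidableEq ι] (S : κ → Finset ι)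
    (W : ι → Set α) (x : α) :
    Finset.univ.filter (fun i => S i ⊆ codeword W x) =
      codeword (fun i => ⋂ s ∈ S i, W s) x := by
  ext i
  simp only [Finset.mem_filter, Finset.mem_univ, true_and, mem_codeword, subset_codeword_iff]

end Codeword

theorem stmt17_general {d n k : ℕ} (ki : Fin n → ℕ)
    (U : (i : Fin n) → Fin (ki i) → Set (Fin d → ℝ))
    (Xh : Fin k → Set (Fin d → ℝ)) :
    (fun c : Finset ((Σ i : Fin n, Fin (ki i)) ⊕ Fin k) =>
        Finset.univ.filter (fun i : Fin n =>
          (Finset.univ.image (fun j : Fin (ki i) =>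
            (Sum.inl ⟨i, j⟩ : (Σ i : Fin n, Fin (ki i)) ⊕ Fin k))) ⊆ c)) ''
      Tk (codeOf (Sum.elim (fun p : Σ i : Fin n, Fin (ki i) => U p.1 p.2) Xh)
            Set.univ)
        (Finset.univ.image (fun j : Fin k =>
          (Sum.inr j : (Σ i : Fin n, Fin (ki i)) ⊕ Fin k))) =
    codeOf (fun i : Fin n => ⋂ j : Fin (ki i), U i j) (⋂ j : Fin k, Xh j) := by
  rw [codeOf_eq_image_codeword, codeOf_eq_image_codeword, Tk_image_codeword, Set.univ_inter,
    Set.image_image]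
  simp only [filter_subset_codeword, Finset.set_biInter_finset_image, Finset.mem_univ,
    Set.iInter_true, Sum.elim_inl, Sum.elim_inr]

/-- A polytope code is the image of a hyperplane-arrangement code: if `C` is realized by
`V_i = ⋂_j U_{ij}` inside `X = ⋂_j X_j` (all `U_{ij}`, `X_j` open half-spaces), `H` is
the code of the full half-space arrangement, and `H'` its trunk on the indices of the
`X_j`, then the morphism defined by the trunks `T_i = Tk_{H'}({i1,…,ik_i})` maps `H'`
onto `C`. -/
theorem stmt17 {d n k : ℕ} (ki : Fin n → ℕ)
    (U : (i : Fin n) → Fin (ki i) → Set (Fin d → ℝ))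
    (Xh : Fin k → Set (Fin d → ℝ))
    (hU : ∀ i j, ∃ (f : (Fin d → ℝ) →ₗ[ℝ] ℝ) (c : ℝ), U i j = {x | c < f x})
    (hX : ∀ j, ∃ (f : (Fin d → ℝ) →ₗ[ℝ] ℝ) (c : ℝ), Xh j = {x | c < f x}) :
    (fun c : Finset ((Σ i : Fin n, Fin (ki i)) ⊕ Fin k) =>
        Finset.univ.filter (fun i : Fin n =>
          (Finset.univ.image (fun j : Fin (ki i) =>
            (Sum.inl ⟨i, j⟩ : (Σ i : Fin n, Fin (ki i)) ⊕ Fin k))) ⊆ c)) ''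
      Tk (codeOf (Sum.elim (fun p : Σ i : Fin n, Fin (ki i) => U p.1 p.2) Xh)
            Set.univ)
        (Finset.univ.image (fun j : Fin k =>
          (Sum.inr j : (Σ i : Fin n, Fin (ki i)) ⊕ Fin k))) =
    codeOf (fun i : Fin n => ⋂ j : Fin (ki i), U i j) (⋂ j : Fin k, Xh j) :=
  stmt17_general ki U Xh
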